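/- For every natural number k, the class REG/k of languages over {0,1} recognized by a deterministic finite automaton with k-bit prefix advice is strictly contained in the class REG/1(⊙) of languages recognized by a deterministic finite automaton with at most one inkdot of advice: every language in REG/k is in REG/1(⊙), and the language { 0^m 1^m : m ∈ ℕ } is in REG/1(⊙) but not in REG/k. -/

import Mathlib

/-- The marked word: the i-th symbol of `w` becomes `(w_i, true)` if `i ∈ S`,
and `(w_i, false)` otherwise. -/
def markWord {α : Type*} (w : List α) (S : Finset ℕ) : List (α × Bool) :=
  (w.zipIdx.map Prod.swap).map (fun p => (p.2, decide (p.1 ∈ S)))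

/-- `L` is recognized by a deterministic finite automaton with at most `a n`
inkdots of advice on inputs of length `n`. -/
def RecognizedWithInkdots {α : Type*} (L : Set (List α)) (a : ℕ → ℕ) : Prop :=
  ∃ (σ : Type) (_ : Fintype σ) (M : DFA (α × Bool) σ) (h : ℕ → Finset ℕ),
    (∀ n, ∀ i ∈ h n, i < n) ∧
    (∀ n, (h n).card ≤ a n) ∧
    (∀ w : List α, w ∈ L ↔ markWord w (h w.length) ∈ M.accepts)
/-- `L` is recognized by a deterministic finite automaton with `k`-bit prefix advice. -/
def RecognizedWithPrefixAdvice {α : Type*} (L : Set (List α)) (k : ℕ) : Prop :=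
  ∃ (σ : Type) (_ : Fintype σ) (M : DFA (Bool ⊕ α) σ) (h : ℕ → Fin k → Bool),
    ∀ w : List α, w ∈ L ↔
      ((List.ofFn (h w.length)).map Sum.inl ++ w.map Sum.inr) ∈ M.accepts


/-!
A DFA with `k` bits of prefix advice is simulated with one inkdot by running it in parallel from
all `2^k` states reachable by reading an advice string, and letting the position of the dot name
the advice string to use. Words shorter than `2^k` have no room for such a dot, but there the DFA
can count the length and knows the advice from a finite table.

For `{0^m 1^m}` one dot on the first `1` suffices: the automaton then only has to check that the
word is `0^a 1^b` and that its first `1` carries the dot. Without dots, the advice only fixes the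
state `q` reached before the input. Iterating one letter enters a cycle after at most `|σ|` steps,
and `e = |σ|!` is a multiple of the cycle length; hence `0^(|σ|+e) 1^(|σ|+e)` and
`0^|σ| 1^(|σ|+2e)`, of equal length, lead from `q` to the same state, although only the first one
is in the language.
-/

section MarkWord

variable {α : Type*} (w : List α) (S : Finset ℕ)

@[simp]
lemma length_markWord : (markWord w S).length = w.length := by
  simp [markWord]

lemma markWord_map_fst : (markWord w S).map Prod.fst = w := by
  unfold markWord
  rw [List.map_map, List.map_map]
  exact List.zipIdx_map_fst 0 w

lemma markWord_map_snd :
    (markWord w S).map Prod.snd = (List.range w.length).map fun i => decide (i ∈ S) := by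
  unfold markWord
  rw [List.map_map, List.map_map, List.range_eq_range', ← List.zipIdx_map_snd 0 w, List.map_map]
  rfl

lemma getElem_markWord {i : ℕ} (hi : i < (markWord w S).length) :
    (markWord w S)[i] = (w[i]'(by simpa using hi), decide (i ∈ S)) := by
  simp [markWord]

end MarkWord

section PrefixAdviceByInkdot

/-- `.inl c`: no dot read yet, after `c` letters (counting saturates at `N`);
`.inr r`: the dot was read at position `r`. -/
def trackDot (N : ℕ) : Fin (N + 1) ⊕ Fin N → Bool → Fin (N + 1) ⊕ Fin N
  | .inl c, false => .inl ⟨min (c + 1) N, by omega⟩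
  | .inl c, true => if hc : (c : ℕ) < N then .inr ⟨c, hc⟩ else .inl c
  | .inr r, _ => .inr r

lemma foldl_trackDot_empty (N n : ℕ) :
    ((List.range n).map fun i => decide (i ∈ (∅ : Finset ℕ))).foldl (trackDot N) (.inl 0) =
      .inl ⟨min n N, by omega⟩ := by
  induction n with
  | zero => simp
  | succ n ih =>
    rw [List.range_succ, List.map_append, List.foldl_append, ih]
    simp [trackDot]
    omega

lemma foldl_trackDot_singleton {N r : ℕ} (hr : r < N) (n : ℕ) :
    ((List.range n).map fun i => decide (i ∈ ({r} : Finset ℕ))).foldl (trackDot N) (.inl 0) =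
      if hn : n ≤ r then .inl ⟨n, by omega⟩ else .inr ⟨r, hr⟩ := by
  induction n with
  | zero => simp
  | succ n ih =>
    rw [List.range_succ, List.map_append, List.foldl_append, ih]
    rcases lt_trichotomy n r with hnr | rfl | hnr
    · rw [dif_pos hnr.le, dif_pos hnr.nat_succ_le]
      simp [trackDot, hnr.ne]
      omega
    · simp [trackDot, hr]
    · rw [dif_neg (by omega), dif_neg (by omega)]
      rfl

variable {A : Type*} [Fintype A]

/-- Words of length `n < |A|` carry no dot; longer ones carry a dot at the index of the advice
`h n` in an enumeration of `A`. -/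
noncomputable def inkdotAdvice (h : ℕ → A) (n : ℕ) : Finset ℕ :=
  if n < Fintype.card A then ∅ else {(Fintype.equivFin A (h n) : ℕ)}

noncomputable def decodeDot (h : ℕ → A) :
    Fin (Fintype.card A + 1) ⊕ Fin (Fintype.card A) → A :=
  Sum.elim (fun c => h c) (Fintype.equivFin A).symm

lemma decodeDot_foldl_trackDot (h : ℕ → A) (n : ℕ) :
    decodeDot h (((List.range n).map fun i => decide (i ∈ inkdotAdvice h n)).foldl
      (trackDot _) (.inl 0)) = h n := by
  unfold inkdotAdvice
  split_ifs with hn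
  · rw [foldl_trackDot_empty]
    simp [decodeDot, Nat.min_eq_left hn.le]
  · rw [foldl_trackDot_singleton (Fin.is_lt _), dif_neg (by omega)]
    simp [decodeDot]

noncomputable def DFA.inkdotSimulation {α σ : Type*} (M : DFA α σ) (start : A → σ)
    (h : ℕ → A) :
    DFA (α × Bool) ((A → σ) × (Fin (Fintype.card A + 1) ⊕ Fin (Fintype.card A))) where
  step s x := (fun a => M.step (s.1 a) x.1, trackDot _ s.2 x.2)
  start := (start, .inl 0)
  accept := {s | s.1 (decodeDot h s.2) ∈ M.accept}

variable {α σ : Type*} (M : DFA α σ) (start : A → σ) (h : ℕ → A)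

lemma DFA.evalFrom_inkdotSimulation
    (s : (A → σ) × (Fin (Fintype.card A + 1) ⊕ Fin (Fintype.card A)))
    (l : List (α × Bool)) :
    (M.inkdotSimulation start h).evalFrom s l =
      (fun a => M.evalFrom (s.1 a) (l.map Prod.fst),
        (l.map Prod.snd).foldl (trackDot _) s.2) := by
  induction l generalizing s with
  | nil => rfl
  | cons x l ih => exact ih _

lemma DFA.eval_inkdotSimulation (l : List (α × Bool)) :
    (M.inkdotSimulation start h).eval l =
      (fun a => M.evalFrom (start a) (l.map Prod.fst),
        (l.map Prod.snd).foldl (trackDot _) (.inl 0)) :=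
  M.evalFrom_inkdotSimulation start h _ l

lemma DFA.markWord_mem_accepts_inkdotSimulation (w : List α) :
    markWord w (inkdotAdvice h w.length) ∈ (M.inkdotSimulation start h).accepts ↔
      M.evalFrom (start (h w.length)) w ∈ M.accept := by
  rw [DFA.mem_accepts, DFA.eval_inkdotSimulation, markWord_map_fst, markWord_map_snd]
  change M.evalFrom (start (decodeDot h _)) w ∈ M.accept ↔ _
  rw [decodeDot_foldl_trackDot]

end PrefixAdviceByInkdot

theorem recognizedWithInkdots_of_evalFrom {α : Type*} {A σ : Type} [Fintype A] [Fintype σ]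
    (M : DFA α σ) (start : A → σ) (h : ℕ → A) :
    RecognizedWithInkdots {w | M.evalFrom (start (h w.length)) w ∈ M.accept} (fun _ => 1) := by
  classical
  refine ⟨_, inferInstance, M.inkdotSimulation start h, inkdotAdvice h, fun n i hi => ?_,
    fun n => ?_, fun w => (M.markWord_mem_accepts_inkdotSimulation start h w).symm⟩
  · unfold inkdotAdvice at hi
    split_ifs at hi with hn
    · simp at hi
    · rw [Finset.mem_singleton] at hi
      have := (Fintype.equivFin A (h n)).is_lt
      omega
  · unfold inkdotAdvice
    split_ifs <;> simp

theorem RecognizedWithPrefixAdvice.recognizedWithInkdots {α : Type*} {L : Set (List α)} {k : ℕ}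
    (hL : RecognizedWithPrefixAdvice L k) : RecognizedWithInkdots L (fun _ => 1) := by
  obtain ⟨σ, _, M, h, hM⟩ := hL
  convert recognizedWithInkdots_of_evalFrom (M.comap Sum.inr)
    (fun a => M.eval ((List.ofFn a).map Sum.inl)) h
  ext w
  rw [hM, DFA.mem_accepts, DFA.eval, DFA.evalFrom_of_append, Set.mem_ofPred_eq,
    DFA.evalFrom_comap]
  rfl

def zerosOnes : Set (List Bool) :=
  {w | ∃ m : ℕ, w = List.replicate m false ++ List.replicate m true}

lemma replicate_append_replicate_mem_zerosOnes {a b : ℕ} :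
    List.replicate a false ++ List.replicate b true ∈ zerosOnes ↔ a = b := by
  refine ⟨fun ⟨m, hm⟩ => ?_, fun h => ⟨a, by rw [h]⟩⟩
  have h0 := congrArg (List.count false) hm
  have h1 := congrArg (List.count true) hm
  simp [List.count_replicate] at h0 h1
  omega

inductive SplitState
  | start | zeros | ones | reject
  deriving DecidableEq

instance : Fintype SplitState :=
  ⟨{.start, .zeros, .ones, .reject}, fun s => by cases s <;> decide⟩

def splitStep : SplitState → Bool × Bool → SplitState
  | .start, (false, false) | .zeros, (false, false) => .zeros
  | .start, (true, true) | .zeros, (true, true) | .ones, (true, false) => .ones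
  | _, _ => .reject

def splitDFA : DFA (Bool × Bool) SplitState := ⟨splitStep, .start, {.start, .ones}⟩

lemma splitDFA_evalFrom_cons (s : SplitState) (x : Bool × Bool) (l : List (Bool × Bool)) :
    splitDFA.evalFrom s (x :: l) = splitDFA.evalFrom (splitStep s x) l := rfl

lemma mem_splitDFA_accept {s : SplitState} : s ∈ splitDFA.accept ↔ s = .start ∨ s = .ones :=
  Iff.rfl

lemma reject_notMem_splitDFA_accept : SplitState.reject ∉ splitDFA.accept := by
  simp [mem_splitDFA_accept]

def IsSplit (l : List (Bool × Bool)) : Prop :=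
  ∃ a b, l = List.replicate a (false, false) ++ (true, true) :: List.replicate b (true, false)

lemma isSplit_cons {x : Bool × Bool} {l : List (Bool × Bool)} :
    IsSplit (x :: l) ↔
      x = (false, false) ∧ IsSplit l ∨ x = (true, true) ∧ ∀ y ∈ l, y = (true, false) := by
  constructor
  · rintro ⟨_ | a, b, hab⟩
    · simp only [List.replicate_zero, List.nil_append, List.cons.injEq] at hab
      exact .inr ⟨hab.1, by simp [hab.2, List.mem_replicate]⟩
    · rw [List.replicate_succ, List.cons_append, List.cons.injEq] at hab
      exact .inl ⟨hab.1, a, b, hab.2⟩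
  · rintro (⟨rfl, a, b, rfl⟩ | ⟨rfl, hl⟩)
    · exact ⟨a + 1, b, rfl⟩
    · exact ⟨0, l.length, by simpa [List.eq_replicate_iff] using hl⟩

lemma splitDFA_evalFrom_reject (l : List (Bool × Bool)) :
    splitDFA.evalFrom .reject l = .reject := by
  induction l with
  | nil => rfl
  | cons x l ih => rcases x with ⟨_ | _, _ | _⟩ <;> exact ih

lemma splitDFA_evalFrom_ones_mem_accept (l : List (Bool × Bool)) :
    splitDFA.evalFrom .ones l ∈ splitDFA.accept ↔ ∀ y ∈ l, y = (true, false) := by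
  induction l with
  | nil => simp [mem_splitDFA_accept]
  | cons x l ih =>
    rw [splitDFA_evalFrom_cons, List.forall_mem_cons]
    rcases x with ⟨_ | _, _ | _⟩ <;>
      simp [splitStep, ih, splitDFA_evalFrom_reject, reject_notMem_splitDFA_accept]

lemma splitDFA_evalFrom_zeros_mem_accept (l : List (Bool × Bool)) :
    splitDFA.evalFrom .zeros l ∈ splitDFA.accept ↔ IsSplit l := by
  induction l with
  | nil => simp [mem_splitDFA_accept, IsSplit]
  | cons x l ih =>
    rw [splitDFA_evalFrom_cons, isSplit_cons]
    rcases x with ⟨_ | _, _ | _⟩ <;>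
      simp [splitStep, ih, splitDFA_evalFrom_reject, reject_notMem_splitDFA_accept,
        splitDFA_evalFrom_ones_mem_accept]

lemma mem_splitDFA_accepts (l : List (Bool × Bool)) :
    l ∈ splitDFA.accepts ↔ l = [] ∨ IsSplit l := by
  rcases l with _ | ⟨x, l⟩
  · simp [DFA.mem_accepts, DFA.eval, splitDFA]
  · rw [DFA.mem_accepts, DFA.eval, ← splitDFA_evalFrom_zeros_mem_accept]
    simp only [reduceCtorEq, false_or]
    rcases x with ⟨_ | _, _ | _⟩ <;> rfl

lemma markWord_replicate_append_replicate (a b : ℕ) :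
    markWord (List.replicate a false ++ List.replicate (b + 1) true) {a} =
      List.replicate a (false, false) ++ (true, true) :: List.replicate b (true, false) := by
  refine List.ext_getElem (by simp) fun i hi _ => ?_
  rw [getElem_markWord]
  simp only [List.getElem_append, List.getElem_replicate, List.getElem_cons,
    List.length_replicate, Finset.mem_singleton]
  split_ifs <;> simp_all <;> omega

def midpointDot (n : ℕ) : Finset ℕ :=
  if n % 2 = 0 ∧ n ≠ 0 then {n / 2} else ∅

lemma mem_midpointDot {n i : ℕ} :
    i ∈ midpointDot n ↔ n % 2 = 0 ∧ n ≠ 0 ∧ i = n / 2 := by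
  unfold midpointDot
  split_ifs with h <;> simp [h]
  tauto

lemma mem_zerosOnes_of_isSplit_markWord {w : List Bool}
    (hw : IsSplit (markWord w (midpointDot w.length))) : w ∈ zerosOnes := by
  obtain ⟨a, b, hab⟩ := hw
  have hw : w = List.replicate a false ++ List.replicate (b + 1) true := by
    rw [← markWord_map_fst w (midpointDot w.length), hab]
    simp [List.replicate_succ]
  have ha : a ∈ midpointDot w.length := by
    have hlt : a < (markWord w (midpointDot w.length)).length := by simp [hw]
    have := congrArg Prod.snd (List.getElem_of_eq hab hlt)
    simpa [getElem_markWord, List.getElem_append_right] using this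
  have hlen : w.length = a + (b + 1) := by simp [hw]
  rw [mem_midpointDot] at ha
  rw [hw, replicate_append_replicate_mem_zerosOnes]
  omega

lemma markWord_midpointDot_eq_nil_or_isSplit {w : List Bool} (hw : w ∈ zerosOnes) :
    markWord w (midpointDot w.length) = [] ∨ IsSplit (markWord w (midpointDot w.length)) := by
  obtain ⟨_ | m, rfl⟩ := hw
  · simp [markWord]
  · refine .inr ⟨m + 1, m, ?_⟩
    rw [List.length_append, List.length_replicate, List.length_replicate, midpointDot,
      if_pos (by omega), show (m + 1 + (m + 1)) / 2 = m + 1 by omega,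
      markWord_replicate_append_replicate]

theorem recognizedWithInkdots_zerosOnes : RecognizedWithInkdots zerosOnes (fun _ => 1) := by
  refine ⟨SplitState, inferInstance, splitDFA, midpointDot, fun n i hi => ?_, fun n => ?_,
    fun w => ?_⟩
  · rw [mem_midpointDot] at hi
    omega
  · unfold midpointDot
    split_ifs <;> simp
  · rw [mem_splitDFA_accepts]
    refine ⟨markWord_midpointDot_eq_nil_or_isSplit, ?_⟩
    rintro (hnil | hsplit)
    · rw [← markWord_map_fst w (midpointDot w.length), hnil]
      exact ⟨0, rfl⟩
    · exact mem_zerosOnes_of_isSplit_markWord hsplit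

lemma DFA.evalFrom_replicate {α σ : Type*} (M : DFA α σ) (s : σ) (a : α) (n : ℕ) :
    M.evalFrom s (List.replicate n a) = (M.step · a)^[n] s := by
  induction n generalizing s with
  | zero => rfl
  | succ n ih => exact ih (M.step s a)

lemma Function.iterate_mem_periodicPts_of_card_le {α : Type*} [Fintype α] (f : α → α) (x : α)
    {i : ℕ} (hi : Fintype.card α ≤ i) : f^[i] x ∈ periodicPts f := by
  obtain ⟨a, b, hne, hab⟩ := Fintype.exists_ne_map_eq_of_card_lt
    (fun j : Fin (Fintype.card α + 1) => f^[j] x) (by simp)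
  wlog hlt : a < b generalizing a b
  · exact this b a hne.symm hab.symm (lt_of_le_of_ne (not_lt.1 hlt) hne.symm)
  have hlt' : (a : ℕ) < b := hlt
  have hb : (b : ℕ) ≤ Fintype.card α := Nat.lt_succ_iff.1 b.2
  refine mk_mem_periodicPts (n := b - a) (by omega) ?_
  calc f^[b - a] (f^[i] x) = f^[i - a] (f^[b] x) := by
        rw [← iterate_add_apply, ← iterate_add_apply]; congr 1; omega
    _ = f^[i] x := by
        rw [← hab, ← iterate_add_apply]; congr 1; omega

lemma Function.iterate_factorial_card_add {α : Type*} [Fintype α] (f : α → α) (x : α)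
    {i : ℕ} (hi : Fintype.card α ≤ i) : f^[(Fintype.card α).factorial + i] x = f^[i] x := by
  rw [iterate_add_apply]
  exact isPeriodicPt_factorial_card_of_mem_periodicPts (iterate_mem_periodicPts_of_card_le f x hi)

lemma DFA.evalFrom_replicate_shift {α σ : Type*} [Fintype σ] (M : DFA α σ) (s : σ) (a b : α)
    {i j : ℕ} (hi : Fintype.card σ ≤ i) (hj : Fintype.card σ ≤ j) :
    M.evalFrom s (List.replicate ((Fintype.card σ).factorial + i) a ++ List.replicate j b) =
      M.evalFrom s (List.replicate i a ++ List.replicate ((Fintype.card σ).factorial + j) b) := by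
  simp only [DFA.evalFrom_of_append, DFA.evalFrom_replicate,
    Function.iterate_factorial_card_add _ _ hi, Function.iterate_factorial_card_add _ _ hj]

lemma mem_iff_of_evalFrom_map_inr_eq {α σ : Type*} {L : Set (List α)} {k : ℕ}
    {M : DFA (Bool ⊕ α) σ} {h : ℕ → Fin k → Bool}
    (hM : ∀ w : List α,
      w ∈ L ↔ (List.ofFn (h w.length)).map Sum.inl ++ w.map Sum.inr ∈ M.accepts)
    {u v : List α} (hlen : u.length = v.length)
    (huv : ∀ s, M.evalFrom s (u.map Sum.inr) = M.evalFrom s (v.map Sum.inr)) :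
    u ∈ L ↔ v ∈ L := by
  rw [hM, hM, hlen, DFA.mem_accepts, DFA.mem_accepts, DFA.eval, DFA.evalFrom_of_append,
    DFA.evalFrom_of_append, huv]

theorem not_recognizedWithPrefixAdvice_zerosOnes {k : ℕ} :
    ¬ RecognizedWithPrefixAdvice zerosOnes k := by
  rintro ⟨σ, _, M, h, hM⟩
  have hpump := mem_iff_of_evalFrom_map_inr_eq hM
    (u := List.replicate ((Fintype.card σ).factorial + Fintype.card σ) false ++
      List.replicate ((Fintype.card σ).factorial + Fintype.card σ) true)
    (v := List.replicate (Fintype.card σ) false ++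
      List.replicate ((Fintype.card σ).factorial + ((Fintype.card σ).factorial +
        Fintype.card σ)) true)
    (by simp only [List.length_append, List.length_replicate]; omega)
    (fun s => by
      simp only [List.map_append, List.map_replicate]
      exact M.evalFrom_replicate_shift s _ _ le_rfl (Nat.le_add_left _ _))
  have hv := replicate_append_replicate_mem_zerosOnes.1
    (hpump.1 (replicate_append_replicate_mem_zerosOnes.2 rfl))
  have := (Fintype.card σ).factorial_pos
  omega

/-- `REG/k ⊊ REG/1(⊙)` over the alphabet `{0,1}`, witnessed by
`{0^m 1^m : m ∈ ℕ}`. -/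
theorem prefix_advice_strictly_weaker_than_one_inkdot (k : ℕ) :
    (∀ L : Set (List Bool),
        RecognizedWithPrefixAdvice L k → RecognizedWithInkdots L (fun _ => 1)) ∧
    RecognizedWithInkdots
      {w : List Bool | ∃ m : ℕ, w = List.replicate m false ++ List.replicate m true}
      (fun _ => 1) ∧
    ¬ RecognizedWithPrefixAdvice
      {w : List Bool | ∃ m : ℕ, w = List.replicate m false ++ List.replicate m true}
      k :=
  ⟨fun _ hL => hL.recognizedWithInkdots, recognizedWithInkdots_zerosOnes,
    not_recognizedWithPrefixAdvice_zerosOnes⟩
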